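/- For all p ∈ [0,1] and all z ∈ [−1,1], the capacity of the induced binary symmetric channel M₂(z) with flip probability q(z) = (1 − √(1−z²)·√(1−p))/2 is maximized at z = 0: 1 − h(q(z)) ≤ 1 − h(q(0)), where q(0) = (1 − √(1−p))/2. -/
import Mathlib

/-- The binary entropy function in base 2 (with the convention `h(0) = h(1) = 0`,
using `Real.logb 2 0 = 0`). -/
noncomputable def binH (x : ℝ) : ℝ := -(x * Real.logb 2 x) - (1 - x) * Real.logb 2 (1 - x)

lemma binH_eq (x : ℝ) : binH x = Real.binEntropy x / Real.log 2 := by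
  simp [binH, Real.binEntropy, Real.logb, Real.log_inv]
  ring

/-- Among the induced binary symmetric channels `M₂(z)` with flip probability
`q(z) = (1 − √(1−z²)·√(1−p))/2`, the capacity `1 − h(q(z))` is maximized at `z = 0`. -/
theorem bsc_capacity_max_at_zero (p z : ℝ) (hp : p ∈ Set.Icc (0 : ℝ) 1)
    (hz : z ∈ Set.Icc (-1 : ℝ) 1) :
    1 - binH ((1 - Real.sqrt (1 - z ^ 2) * Real.sqrt (1 - p)) / 2) ≤
      1 - binH ((1 - Real.sqrt (1 - p)) / 2) := by
  obtain ⟨hp0, hp1⟩ := hp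
  obtain ⟨hz0, hz1⟩ := hz
  set s := Real.sqrt (1 - p) with hs
  set t := Real.sqrt (1 - z ^ 2) with ht
  have hs0 : 0 ≤ s := Real.sqrt_nonneg _
  have hs1 : s ≤ 1 := Real.sqrt_le_one.mpr (by linarith)
  have ht0 : 0 ≤ t := Real.sqrt_nonneg _
  have ht1 : t ≤ 1 := Real.sqrt_le_one.mpr (by nlinarith)
  have hts : t * s ≤ s := by nlinarith
  have hts0 : 0 ≤ t * s := mul_nonneg ht0 hs0
  have hmem1 : (1 - s) / 2 ∈ Set.Icc (0:ℝ) 2⁻¹ := by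
    constructor <;> [linarith; linarith]
  have hmem2 : (1 - t * s) / 2 ∈ Set.Icc (0:ℝ) 2⁻¹ := by
    constructor <;> [linarith; linarith]
  have hle : (1 - s) / 2 ≤ (1 - t * s) / 2 := by linarith
  have hmono := Real.binEntropy_strictMonoOn.monotoneOn hmem1 hmem2 hle
  have hlog2 : 0 < Real.log 2 := Real.log_pos (by norm_num)
  rw [binH_eq, binH_eq]
  gcongr
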